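/- Let γ ∈ (0,1), let T̄ : C(Z) → C(Z) be a γ-contraction in the sup norm with unique fixed point Q* ∈ C(Z), and let q* ∈ C(Z) be the unique fixed point of the smoothed operator K_μ ∘ T̄. Suppose Q* is α-Hölder for some α ∈ (0,1]: there exists L_Q < ∞ with |Q*(z) − Q*(u)| ≤ L_Q · 𝖽(z,u)^α for all z,u ∈ Z. Then ‖Q* − q*‖ ≤ (1/(1−γ)) ‖Q* − K_μ[Q*]‖ ≤ (L_Q/(1−γ)) · ξ_μ, where ξ_μ := sup_{z∈Z} (∫_Z 𝖽(z,u)^α κ(z,u) μ(du)) / (∫_Z κ(z,u) μ(du)). -/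

import Mathlib

/-!
`K_μ` averages against the probability weight `κ(z,·) μ / ∫ κ(z,·) dμ`, so it is 1-Lipschitz in
the sup norm and `K_μ ∘ T̄` is a `γ`-contraction; the a priori estimate
`dist x q* ≤ dist x (K_μ (T̄ x)) / (1 - γ)` for contractions, at `x = Q* = T̄ Q*`, is the first
inequality. For the second, `Q*(z) - K_μ[Q*](z)` is the `κ(z,·)`-weighted average of
`Q*(z) - Q*(u)`, which the Hölder bound dominates by `L_Q` times the weighted average of
`𝖽(z,u)^α`, i.e. by `L_Q ξ_μ`.
-/

open MeasureTheory

section WeightedAverage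

variable {Z : Type*} [MeasurableSpace Z] {μ : Measure Z} {w f f' g : Z → ℝ}

/-- `K_μ[q](z) = weightedAverage μ (κ z) q`, and `ξ_μ` is the supremum over `z` of
`weightedAverage μ (κ z) (fun u => dist z u ^ α)`. -/
noncomputable def weightedAverage (μ : Measure Z) (w f : Z → ℝ) : ℝ :=
  (∫ u, w u * f u ∂μ) / ∫ u, w u ∂μ

lemma weightedAverage_const (hw : ∫ u, w u ∂μ ≠ 0) (c : ℝ) :
    weightedAverage μ w (fun _ => c) = c := by
  rw [weightedAverage, integral_mul_const, mul_div_cancel_left₀ c hw]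

lemma weightedAverage_const_mul (c : ℝ) :
    weightedAverage μ w (fun u => c * f u) = c * weightedAverage μ w f := by
  simp_rw [weightedAverage, mul_left_comm _ c, integral_const_mul, mul_div_assoc]

lemma weightedAverage_sub (hf : Integrable (fun u => w u * f u) μ)
    (hf' : Integrable (fun u => w u * f' u) μ) :
    weightedAverage μ w (fun u => f u - f' u) = weightedAverage μ w f - weightedAverage μ w f' := by
  simp_rw [weightedAverage, mul_sub, integral_sub hf hf', sub_div]

lemma weightedAverage_nonneg (hw : ∀ u, 0 ≤ w u) (hf : ∀ u, 0 ≤ f u) :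
    0 ≤ weightedAverage μ w f :=
  div_nonneg (integral_nonneg fun u => mul_nonneg (hw u) (hf u)) (integral_nonneg hw)

lemma weightedAverage_mono (hw : ∀ u, 0 ≤ w u) (hf : Integrable (fun u => w u * f u) μ)
    (hg : Integrable (fun u => w u * g u) μ) (hfg : ∀ u, f u ≤ g u) :
    weightedAverage μ w f ≤ weightedAverage μ w g :=
  div_le_div_of_nonneg_right
    (integral_mono hf hg fun u => mul_le_mul_of_nonneg_left (hfg u) (hw u)) (integral_nonneg hw)

lemma abs_weightedAverage_le (hw : ∀ u, 0 ≤ w u) (hf : Integrable (fun u => w u * f u) μ)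
    (hg : Integrable (fun u => w u * g u) μ) (hfg : ∀ u, |f u| ≤ g u) :
    |weightedAverage μ w f| ≤ weightedAverage μ w g := by
  rw [weightedAverage, abs_div, abs_of_nonneg (integral_nonneg hw : 0 ≤ ∫ u, w u ∂μ)]
  refine div_le_div_of_nonneg_right ((abs_integral_le_integral_abs).trans ?_) (integral_nonneg hw)
  refine integral_mono hf.abs hg fun u => ?_
  simp only [abs_mul, abs_of_nonneg (hw u)]
  exact mul_le_mul_of_nonneg_left (hfg u) (hw u)

lemma abs_weightedAverage_sub_le (hw : ∀ u, 0 ≤ w u) (hf : Integrable (fun u => w u * f u) μ)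
    (hf' : Integrable (fun u => w u * f' u) μ) (hg : Integrable (fun u => w u * g u) μ)
    (hfg : ∀ u, |f u - f' u| ≤ g u) :
    |weightedAverage μ w f - weightedAverage μ w f'| ≤ weightedAverage μ w g := by
  rw [← weightedAverage_sub hf hf']
  exact abs_weightedAverage_le hw (by simp_rw [mul_sub]; exact hf.sub hf') hg hfg

lemma abs_sub_weightedAverage_le {c L : ℝ} (hw : ∀ u, 0 ≤ w u) (hw₀ : ∫ u, w u ∂μ ≠ 0)
    (hw_int : Integrable w μ) (hf : Integrable (fun u => w u * f u) μ)
    (hg : Integrable (fun u => w u * g u) μ) (hfg : ∀ u, |c - f u| ≤ L * g u) :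
    |c - weightedAverage μ w f| ≤ L * weightedAverage μ w g := by
  rw [← weightedAverage_const hw₀ c, ← weightedAverage_const_mul]
  refine abs_weightedAverage_sub_le hw (hw_int.mul_const c) hf ?_ hfg
  simpa only [mul_left_comm L] using hg.const_mul L

end WeightedAverage

lemma dist_le_of_isFixedPt_comp {E : Type*} [MetricSpace E] {K T : E → E} {γ : NNReal}
    (hγ : γ < 1) (hK : LipschitzWith 1 K) (hT : LipschitzWith γ T) {Q q : E}
    (hQ : Function.IsFixedPt T Q) (hq : Function.IsFixedPt (K ∘ T) q) :
    dist Q q ≤ dist Q (K Q) / (1 - γ) := by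
  have hKT : ContractingWith γ (K ∘ T) := ⟨hγ, by simpa only [one_mul] using hK.comp hT⟩
  simpa only [Function.comp_apply, hQ.eq] using hKT.dist_le_of_fixedPoint Q hq

lemma ContinuousMap.norm_le_mul_iSup_of_abs_le {Z : Type*} [TopologicalSpace Z] [CompactSpace Z]
    {f : C(Z, ℝ)} {r : Z → ℝ} {L : ℝ} (hr0 : ∀ z, 0 ≤ r z) (hr : BddAbove (Set.range r))
    (hf : ∀ z, |f z| ≤ L * r z) : ‖f‖ ≤ L * ⨆ z, r z := by
  rcases le_or_gt 0 L with hL | hL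
  · refine (f.norm_le (mul_nonneg hL (Real.iSup_nonneg hr0))).2 fun z => ?_
    exact (hf z).trans (mul_le_mul_of_nonneg_left (le_ciSup hr z) hL)
  · -- a negative `L` forces `f = 0` and `r = 0`
    have hr_eq : ∀ z, r z = 0 := fun z =>
      le_antisymm (nonpos_of_mul_nonneg_right ((abs_nonneg _).trans (hf z)) hL) (hr0 z)
    refine (f.norm_le (by simp [hr_eq])).2 fun z => ?_
    simpa [hr_eq] using hf z

lemma Continuous.integrable_of_compactSpace {Z : Type*} [TopologicalSpace Z] [CompactSpace Z]
    [MeasurableSpace Z] [OpensMeasurableSpace Z] {μ : Measure Z} [IsFiniteMeasure μ] {f : Z → ℝ}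
    (hf : Continuous f) : Integrable f μ :=
  hf.integrable_of_hasCompactSupport (.of_compactSpace f)

lemma lipschitzWith_one_of_eq_weightedAverage {Z : Type*} [TopologicalSpace Z] [CompactSpace Z]
    [MeasurableSpace Z] [OpensMeasurableSpace Z] {μ : Measure Z} [IsFiniteMeasure μ]
    {κ : Z → Z → ℝ} (hκ : ∀ z, Continuous (κ z))
    (hκ0 : ∀ z u, 0 ≤ κ z u) (hκ₀ : ∀ z, ∫ u, κ z u ∂μ ≠ 0) {K : C(Z, ℝ) → C(Z, ℝ)}
    (hK : ∀ q z, K q z = weightedAverage μ (κ z) q) : LipschitzWith 1 K := by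
  refine .of_dist_le_mul fun p p' => ?_
  rw [NNReal.coe_one, one_mul, ContinuousMap.dist_le dist_nonneg]
  intro z
  have hint : ∀ q : Z → ℝ, Continuous q → Integrable (fun u => κ z u * q u) μ :=
    fun q hq => ((hκ z).mul hq).integrable_of_compactSpace
  rw [Real.dist_eq, hK, hK, ← weightedAverage_const (hκ₀ z) (dist p p')]
  exact abs_weightedAverage_sub_le (hκ0 z) (hint p p.continuous) (hint p' p'.continuous)
    (hint _ continuous_const) fun u => (Real.dist_eq _ _).symm.trans_le (p.dist_apply_le_dist u)

lemma continuous_dist_rpow_const {Z : Type*} [PseudoMetricSpace Z] (z : Z) {α : ℝ} (hα : 0 ≤ α) :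
    Continuous fun u => dist z u ^ α :=
  (continuous_const.dist continuous_id).rpow_const fun _ => Or.inr hα

section HolderBound

variable {Z : Type*} [PseudoMetricSpace Z] [CompactSpace Z] [MeasurableSpace Z]
  [OpensMeasurableSpace Z] {μ : Measure Z} [IsFiniteMeasure μ] {κ : Z → Z → ℝ}

lemma bddAbove_range_weightedAverage_dist_rpow (hκ : ∀ z, Continuous (κ z))
    (hκ0 : ∀ z u, 0 ≤ κ z u) (hκ₀ : ∀ z, ∫ u, κ z u ∂μ ≠ 0) {α : ℝ} (hα : 0 ≤ α) :
    BddAbove (Set.range fun z => weightedAverage μ (κ z) fun u => dist z u ^ α) := by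
  refine ⟨Metric.diam (Set.univ : Set Z) ^ α, Set.forall_mem_range.2 fun z => ?_⟩
  rw [← weightedAverage_const (hκ₀ z) (Metric.diam (Set.univ : Set Z) ^ α)]
  refine weightedAverage_mono (hκ0 z)
    ((hκ z).mul (continuous_dist_rpow_const z hα)).integrable_of_compactSpace
    ((hκ z).mul continuous_const).integrable_of_compactSpace fun u => ?_
  exact Real.rpow_le_rpow dist_nonneg
    (Metric.dist_le_diam_of_mem Metric.isBounded_of_compactSpace trivial trivial) hα

lemma norm_sub_le_mul_iSup_weightedAverage_dist_rpow (hκ : ∀ z, Continuous (κ z))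
    (hκ0 : ∀ z u, 0 ≤ κ z u) (hκ₀ : ∀ z, ∫ u, κ z u ∂μ ≠ 0) {K : C(Z, ℝ) → C(Z, ℝ)}
    (hK : ∀ q z, K q z = weightedAverage μ (κ z) q) {α L : ℝ} (hα : 0 ≤ α) {Q : C(Z, ℝ)}
    (hQ : ∀ z u, |Q z - Q u| ≤ L * dist z u ^ α) :
    ‖Q - K Q‖ ≤ L * ⨆ z, weightedAverage μ (κ z) fun u => dist z u ^ α := by
  refine ContinuousMap.norm_le_mul_iSup_of_abs_le
    (fun z => weightedAverage_nonneg (hκ0 z) fun u => by positivity)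
    (bddAbove_range_weightedAverage_dist_rpow hκ hκ0 hκ₀ hα) fun z => ?_
  rw [ContinuousMap.sub_apply, hK]
  exact abs_sub_weightedAverage_le (hκ0 z) (hκ₀ z) (hκ z).integrable_of_compactSpace
    ((hκ z).mul Q.continuous).integrable_of_compactSpace
    ((hκ z).mul (continuous_dist_rpow_const z hα)).integrable_of_compactSpace (hQ z)

end HolderBound

theorem smoothed_fixed_point_approximation_error_general
    {Z : Type*} [MetricSpace Z] [CompactSpace Z]
    [MeasurableSpace Z] [BorelSpace Z]
    (κ : Z → Z → ℝ) (hκcont : Continuous fun p : Z × Z => κ p.1 p.2)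
    (κmin : ℝ) (hκmin : 0 < κmin) (hκlb : ∀ z u, κmin ≤ κ z u)
    (μ : Measure Z) [IsProbabilityMeasure μ]
    (γ : ℝ) (hγ0 : 0 < γ) (hγ1 : γ < 1)
    (T : C(Z, ℝ) → C(Z, ℝ))
    (hT : ∀ q q' : C(Z, ℝ), ‖T q - T q'‖ ≤ γ * ‖q - q'‖)
    (K : C(Z, ℝ) → C(Z, ℝ))
    (hK : ∀ (q : C(Z, ℝ)) (z : Z),
      K q z = (∫ u, κ z u * q u ∂μ) / ∫ u, κ z u ∂μ)
    (Qstar : C(Z, ℝ)) (hQfix : T Qstar = Qstar)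
    (qstar : C(Z, ℝ)) (hqfix : K (T qstar) = qstar)
    (α : ℝ) (hα0 : 0 < α)
    (LQ : ℝ) (hHolder : ∀ z u : Z, |Qstar z - Qstar u| ≤ LQ * dist z u ^ α) :
    ‖Qstar - qstar‖ ≤ (1 / (1 - γ)) * ‖Qstar - K Qstar‖ ∧
      (1 / (1 - γ)) * ‖Qstar - K Qstar‖ ≤ (LQ / (1 - γ)) *
        ⨆ z : Z, (∫ u, dist z u ^ α * κ z u ∂μ) / ∫ u, κ z u ∂μ := by
  have hκ : ∀ z, Continuous (κ z) := fun z => hκcont.comp (.prodMk_right z)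
  have hκ0 : ∀ z u, 0 ≤ κ z u := fun z u => hκmin.le.trans (hκlb z u)
  have hκ₀ : ∀ z, ∫ u, κ z u ∂μ ≠ 0 := fun z => by
    have := integral_mono (integrable_const κmin) ((hκ z).integrable_of_compactSpace (μ := μ))
      (hκlb z)
    simp only [integral_const, probReal_univ, one_smul] at this
    exact (hκmin.trans_le this).ne'
  lift γ to NNReal using hγ0.le
  refine ⟨?_, ?_⟩
  · have hTlip : LipschitzWith γ T :=
      .of_dist_le_mul fun q q' => by simpa only [dist_eq_norm] using hT q q'
    simpa only [dist_eq_norm, div_eq_inv_mul, mul_one] using dist_le_of_isFixedPt_comp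
      (by exact_mod_cast hγ1) (lipschitzWith_one_of_eq_weightedAverage hκ hκ0 hκ₀ hK) hTlip
      hQfix hqfix
  · have hξ : ∀ z, (∫ u, dist z u ^ α * κ z u ∂μ) / ∫ u, κ z u ∂μ
        = weightedAverage μ (κ z) fun u => dist z u ^ α := fun z => by
      simp only [weightedAverage, mul_comm]
    calc (1 / (1 - γ)) * ‖Qstar - K Qstar‖
        ≤ (1 / (1 - γ)) * (LQ * ⨆ z, weightedAverage μ (κ z) fun u => dist z u ^ α) := by
          gcongr
          exact norm_sub_le_mul_iSup_weightedAverage_dist_rpow hκ hκ0 hκ₀ hK hα0.le hHolder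
      _ = _ := by simp only [hξ]; ring

/-- approximation error of the smoothed fixed point: if `Q*` is the
fixed point of the `γ`-contraction `T̄`, `q*` is the fixed point of `K_μ ∘ T̄`, and
`Q*` is `α`-Hölder with constant `L_Q`, then
`‖Q* − q*‖ ≤ (1/(1−γ))‖Q* − K_μ[Q*]‖ ≤ (L_Q/(1−γ)) ξ_μ` where
`ξ_μ = sup_z (∫ 𝖽(z,u)^α κ(z,u) μ(du)) / (∫ κ(z,u) μ(du))`. -/
theorem smoothed_fixed_point_approximation_error
    {Z : Type*} [MetricSpace Z] [CompactSpace Z] [Nonempty Z]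
    [MeasurableSpace Z] [BorelSpace Z]
    (κ : Z → Z → ℝ) (hκcont : Continuous fun p : Z × Z => κ p.1 p.2)
    (κmin : ℝ) (hκmin : 0 < κmin) (hκlb : ∀ z u, κmin ≤ κ z u)
    (μ : Measure Z) [IsProbabilityMeasure μ]
    (γ : ℝ) (hγ0 : 0 < γ) (hγ1 : γ < 1)
    (T : C(Z, ℝ) → C(Z, ℝ))
    (hT : ∀ q q' : C(Z, ℝ), ‖T q - T q'‖ ≤ γ * ‖q - q'‖)
    (K : C(Z, ℝ) → C(Z, ℝ))
    (hK : ∀ (q : C(Z, ℝ)) (z : Z),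
      K q z = (∫ u, κ z u * q u ∂μ) / ∫ u, κ z u ∂μ)
    (Qstar : C(Z, ℝ)) (hQfix : T Qstar = Qstar)
    (qstar : C(Z, ℝ)) (hqfix : K (T qstar) = qstar)
    (α : ℝ) (hα0 : 0 < α) (hα1 : α ≤ 1)
    (LQ : ℝ) (hHolder : ∀ z u : Z, |Qstar z - Qstar u| ≤ LQ * dist z u ^ α) :
    ‖Qstar - qstar‖ ≤ (1 / (1 - γ)) * ‖Qstar - K Qstar‖ ∧
      (1 / (1 - γ)) * ‖Qstar - K Qstar‖ ≤ (LQ / (1 - γ)) *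
        ⨆ z : Z, (∫ u, dist z u ^ α * κ z u ∂μ) / ∫ u, κ z u ∂μ :=
  smoothed_fixed_point_approximation_error_general κ hκcont κmin hκmin hκlb μ γ hγ0 hγ1 T hT K hK
    Qstar hQfix qstar hqfix α hα0 LQ hHolder
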